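/- Fix C ∈ (0,∞) and d ≥ 1. On the convex set 𝓜 := {A positive definite d×d : A ≤ C·I}, the function Ψ(M) := −log det(M) is (1/C²)-strongly convex with respect to the Frobenius norm: Ψ(N) − Ψ(M) − DΨ(M)(N−M) ≥ (1/(2C²))·|N−M|² for all M, N ∈ 𝓜, where DΨ(M)E = −tr(M^{−1}E). -/

import Mathlib

/-!
Diagonalise `M` and `N` simultaneously by congruence: `M = W Wᵀ`, `N = W diag(μ) Wᵀ` with `μ > 0`.
The Bregman gap of `−log det` is then `∑ (μᵢ − 1 − log μᵢ)`, while, with `G = diag(μ − 1)` and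
`P = WᵀW`, `|N − M|² = tr(G P G P) ≤ C ∑ (μᵢ − 1)² Pᵢᵢ`. Since `WWᵀ = M ≤ C` and `WWᵀ`, `WᵀW` have
the same nonzero spectrum, `P ≤ C`; likewise `N ≤ C` gives `μᵢ Pᵢᵢ ≤ C`. So each term is at most
`C² (μᵢ − 1)² min(1, 1/μᵢ) ≤ 2 C² (μᵢ − 1 − log μᵢ)`.
-/

open Matrix

/-- The Frobenius norm `|A| = tr(Aᵀ A)^{1/2}` of a real matrix. -/
noncomputable def frob {d : ℕ} (A : Matrix (Fin d) (Fin d) ℝ) : ℝ :=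
  Real.sqrt (Aᵀ * A).trace

namespace Real

lemma log_le_sub_one_sub_sq_div_two {x : ℝ} (hx : 0 < x) (hx1 : x ≤ 1) :
    log x ≤ x - 1 - (x - 1) ^ 2 / 2 := by
  have hseries := hasSum_pow_div_log_of_abs_lt_one (x := 1 - x)
    (by rw [abs_lt]; constructor <;> linarith)
  have := sum_le_hasSum (Finset.range 2) (fun n _ => by positivity) hseries
  norm_num [Finset.sum_range_succ] at this
  nlinarith

lemma log_le_sub_inv_div_two {x : ℝ} (hx : 1 ≤ x) : log x ≤ (x - x⁻¹) / 2 :=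
  sinh_log (by linarith) ▸ self_le_sinh_iff.mpr (log_nonneg hx)

lemma sq_sub_one_mul_le_two_mul_sub_one_sub_log {x p c : ℝ} (hx : 0 < x) (hp : 0 ≤ p)
    (hpc : p ≤ c) (hxp : x * p ≤ c) : (x - 1) ^ 2 * p ≤ 2 * c * (x - 1 - log x) := by
  rcases le_total x 1 with hx1 | hx1
  · have := log_le_sub_one_sub_sq_div_two hx hx1
    nlinarith [sq_nonneg (x - 1)]
  · have := log_le_sub_inv_div_two hx1
    have hxinv : x * x⁻¹ = 1 := mul_inv_cancel₀ hx.ne'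
    have hsq : (x - 1) ^ 2 ≤ 2 * x * (x - 1 - log x) := by nlinarith
    have hnonneg : 0 ≤ x - 1 - log x := by linarith [log_le_sub_one_of_pos hx]
    calc (x - 1) ^ 2 * p ≤ 2 * (x - 1 - log x) * (x * p) := by nlinarith
      _ ≤ 2 * c * (x - 1 - log x) := by nlinarith

end Real

namespace Matrix

open scoped MatrixOrder ComplexOrder

section RCLike

variable {m n 𝕜 : Type*} [Fintype m] [Fintype n] [DecidableEq m] [DecidableEq n] [RCLike 𝕜]

/-- Both sides are Schur complements in `!![1, A; Aᴴ, 1]`. -/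
lemma posSemidef_one_sub_conjTranspose_mul_self_iff (A : Matrix m n 𝕜) :
    (1 - Aᴴ * A).PosSemidef ↔ (1 - A * Aᴴ).PosSemidef := by
  let : Invertible (1 : Matrix m m 𝕜) := invertibleOne
  let : Invertible (1 : Matrix n n 𝕜) := invertibleOne
  have h₁₁ := PosDef.fromBlocks₁₁ (A := (1 : Matrix m m 𝕜)) A (1 : Matrix n n 𝕜) PosDef.one
  have h₂₂ := PosDef.fromBlocks₂₂ (D := (1 : Matrix n n 𝕜)) (1 : Matrix m m 𝕜) A PosDef.one
  simp only [inv_one, Matrix.mul_one] at h₁₁ h₂₂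
  exact h₁₁.symm.trans h₂₂

omit [Fintype n] in
lemma posSemidef_smul_one_sub_iff {c : ℝ} (hc : 0 < c) (X : Matrix n n 𝕜) :
    (c • 1 - X).PosSemidef ↔ (1 - c⁻¹ • X).PosSemidef := by
  rw [show c • 1 - X = c • (1 - c⁻¹ • X) by rw [smul_sub, smul_inv_smul₀ hc.ne']]
  refine ⟨fun h => ?_, fun h => h.smul hc.le⟩
  simpa [inv_smul_smul₀ hc.ne'] using h.smul (inv_nonneg.mpr hc.le)

lemma posSemidef_smul_one_sub_conjTranspose_mul_self_iff {c : ℝ} (hc : 0 < c)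
    (A : Matrix m n 𝕜) : (c • 1 - Aᴴ * A).PosSemidef ↔ (c • 1 - A * Aᴴ).PosSemidef := by
  have hs : (√c)⁻¹ * (√c)⁻¹ = c⁻¹ := by rw [← mul_inv, Real.mul_self_sqrt hc.le]
  have h₁ : c⁻¹ • (Aᴴ * A) = ((√c)⁻¹ • A)ᴴ * ((√c)⁻¹ • A) := by
    rw [conjTranspose_smul, star_trivial, Matrix.smul_mul, Matrix.mul_smul, smul_smul, hs]
  have h₂ : c⁻¹ • (A * Aᴴ) = ((√c)⁻¹ • A) * ((√c)⁻¹ • A)ᴴ := by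
    rw [conjTranspose_smul, star_trivial, Matrix.smul_mul, Matrix.mul_smul, smul_smul, hs]
  rw [posSemidef_smul_one_sub_iff hc, posSemidef_smul_one_sub_iff hc, h₁, h₂]
  exact posSemidef_one_sub_conjTranspose_mul_self_iff _

omit [Fintype n] in
lemma apply_le_of_posSemidef_smul_one_sub {A : Matrix n n 𝕜} {c : ℝ}
    (h : (c • 1 - A).PosSemidef) (i : n) : A i i ≤ c := by
  simpa [sub_nonneg, RCLike.real_smul_eq_coe_mul] using h.diag_nonneg (i := i)

lemma PosSemidef.trace_mul_nonneg {A B : Matrix n n 𝕜} (hA : A.PosSemidef) (hB : B.PosSemidef) :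
    0 ≤ (A * B).trace := by
  obtain ⟨Y, rfl⟩ := CStarAlgebra.nonneg_iff_eq_star_mul_self.mp hA.nonneg
  rw [Matrix.mul_assoc, trace_mul_comm, star_eq_conjTranspose]
  exact (hB.mul_mul_conjTranspose_same Y).trace_nonneg

lemma PosSemidef.trace_mul_le {A B : Matrix n n 𝕜} (hA : A.PosSemidef) {c : ℝ}
    (hB : (c • 1 - B).PosSemidef) : (A * B).trace ≤ c • A.trace := by
  have := hA.trace_mul_nonneg hB
  rwa [mul_sub, mul_smul_comm, Matrix.mul_one, trace_sub, trace_smul, sub_nonneg] at this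

end RCLike

variable {n : Type*} [Fintype n] [DecidableEq n]

/-- `W = Yᴴ V`, where `M = Yᴴ Y` and the unitary `V` diagonalises `Y⁻ᴴ N Y⁻¹`. -/
lemma PosDef.exists_eq_mul_conjTranspose_and_eq_mul_diagonal_mul_conjTranspose
    {M N : Matrix n n ℝ} (hM : M.PosDef) (hN : N.PosDef) :
    ∃ (W : Matrix n n ℝ) (μ : n → ℝ), IsUnit W ∧ (∀ i, 0 < μ i) ∧
      M = W * Wᴴ ∧ N = W * diagonal μ * Wᴴ := by
  obtain ⟨Y, hY, rfl⟩ := CStarAlgebra.isStrictlyPositive_iff_eq_star_mul_self.mp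
    hM.isStrictlyPositive
  have hZ : (star Y⁻¹ * N * Y⁻¹).PosDef :=
    (isUnit_nonsing_inv_iff.mpr hY).posDef_star_left_conjugate_iff.mpr hN
  obtain ⟨V, μ, hμ, hZV⟩ : ∃ (V : unitaryGroup n ℝ) (μ : n → ℝ), (∀ i, 0 < μ i) ∧
      star Y⁻¹ * N * Y⁻¹ = V * diagonal μ * star (V : Matrix n n ℝ) :=
    ⟨_, _, hZ.eigenvalues_pos, by simpa using hZ.1.spectral_theorem⟩
  have hYY : Y⁻¹ * Y = 1 := nonsing_inv_mul _ ((isUnit_iff_isUnit_det Y).mp hY)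
  refine ⟨star Y * V, μ, hY.star.mul Unitary.isUnit_coe, hμ, ?_, ?_⟩ <;>
    simp only [← star_eq_conjTranspose, star_mul, star_star, Matrix.mul_assoc]
  · rw [← Matrix.mul_assoc (V : Matrix n n ℝ), Unitary.mul_star_self_of_mem V.2, Matrix.one_mul]
  · calc N = star (Y⁻¹ * Y) * N * (Y⁻¹ * Y) := by
          rw [hYY, star_one, Matrix.one_mul, Matrix.mul_one]
      _ = star Y * ((star Y⁻¹ * N * Y⁻¹) * Y) := by simp only [star_mul, Matrix.mul_assoc]
      _ = _ := by rw [hZV]; simp only [Matrix.mul_assoc]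

lemma det_mul_diagonal_mul_conjTranspose (W : Matrix n n ℝ) (μ : n → ℝ) :
    (W * diagonal μ * Wᴴ).det = (W * Wᴴ).det * ∏ i, μ i := by
  rw [det_mul, det_mul, det_mul, det_diagonal]; ring

lemma trace_inv_mul_sub_eq_sum_sub_one {W : Matrix n n ℝ} (hW : IsUnit W) (μ : n → ℝ) :
    ((W * Wᴴ)⁻¹ * (W * diagonal μ * Wᴴ - W * Wᴴ)).trace = ∑ i, (μ i - 1) := by
  have hWdet : IsUnit W.det := (isUnit_iff_isUnit_det W).mp hW
  have hWHdet : IsUnit Wᴴ.det := (isUnit_iff_isUnit_det _).mp hW.star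
  rw [mul_sub, nonsing_inv_mul _ (by rw [det_mul]; exact hWdet.mul hWHdet), trace_sub,
    trace_one, Matrix.mul_inv_rev, Finset.sum_sub_distrib, ← trace_diagonal]
  simp only [Finset.sum_const, Finset.card_univ, nsmul_eq_mul, mul_one]
  congr 1
  calc (Wᴴ⁻¹ * W⁻¹ * (W * diagonal μ * Wᴴ)).trace
      = (Wᴴ⁻¹ * ((W⁻¹ * W) * diagonal μ * Wᴴ)).trace := by simp only [Matrix.mul_assoc]
    _ = (diagonal μ * (Wᴴ * Wᴴ⁻¹)).trace := by
      rw [nonsing_inv_mul _ hWdet, Matrix.one_mul, trace_mul_comm, Matrix.mul_assoc]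
    _ = (diagonal μ).trace := by rw [mul_nonsing_inv _ hWHdet, Matrix.mul_one]

lemma neg_log_det_sub_sub_eq_sum {W : Matrix n n ℝ} (hW : IsUnit W) {μ : n → ℝ}
    (hμ : ∀ i, 0 < μ i) :
    -Real.log (W * diagonal μ * Wᴴ).det - -Real.log (W * Wᴴ).det
        - -((W * Wᴴ)⁻¹ * (W * diagonal μ * Wᴴ - W * Wᴴ)).trace
      = ∑ i, (μ i - 1 - Real.log (μ i)) := by
  have hdet : (W * Wᴴ).det ≠ 0 := by
    rw [det_mul, det_conjTranspose, star_trivial]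
    exact mul_ne_zero ((isUnit_iff_isUnit_det W).mp hW).ne_zero
      ((isUnit_iff_isUnit_det W).mp hW).ne_zero
  rw [det_mul_diagonal_mul_conjTranspose, Real.log_mul hdet
      (Finset.prod_ne_zero_iff.mpr fun i _ => (hμ i).ne'),
    Real.log_prod fun i _ => (hμ i).ne', trace_inv_mul_sub_eq_sum_sub_one hW]
  simp only [Finset.sum_sub_distrib]
  ring

lemma trace_mul_self_sub_le {W : Matrix n n ℝ} (μ : n → ℝ) {c : ℝ}
    (hP : (c • 1 - Wᴴ * W).PosSemidef) :
    ((W * diagonal μ * Wᴴ - W * Wᴴ) * (W * diagonal μ * Wᴴ - W * Wᴴ)).trace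
      ≤ c * ∑ i, (μ i - 1) ^ 2 * (Wᴴ * W) i i := by
  set G : Matrix n n ℝ := diagonal (fun i => μ i - 1)
  set P := Wᴴ * W
  have hE : W * diagonal μ * Wᴴ - W * Wᴴ = W * G * Wᴴ := by
    have hG : diagonal μ - 1 = G := by rw [← diagonal_one, diagonal_sub]
    rw [← hG, mul_sub, sub_mul, Matrix.mul_one]
  have hGPG : (G * P * G).PosSemidef := by
    have hG : Gᴴ = G := by simp [G]
    simpa only [hG] using (posSemidef_conjTranspose_mul_self W).conjTranspose_mul_mul_same G
  have htr : ((W * G * Wᴴ) * (W * G * Wᴴ)).trace = (G * P * G * P).trace := by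
    simp only [Matrix.mul_assoc]
    rw [trace_mul_comm W]
    simp only [P, Matrix.mul_assoc]
  have hdiag : (G * P * G).trace = ∑ i, (μ i - 1) ^ 2 * P i i := by
    rw [trace_mul_cycle]
    simp [G, trace, diagonal_mul, sq]
  rw [hE, htr, ← hdiag]
  exact hGPG.trace_mul_le hP

lemma mul_conjTranspose_mul_self_apply_le {W : Matrix n n ℝ} {μ : n → ℝ}
    (hμ : ∀ i, 0 ≤ μ i) {c : ℝ} (hc : 0 < c) (hN : (c • 1 - W * diagonal μ * Wᴴ).PosSemidef)
    (i : n) :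
    μ i * (Wᴴ * W) i i ≤ c := by
  set A := W * diagonal (fun i => √(μ i))
  have hAA : A * Aᴴ = W * diagonal μ * Wᴴ := by
    simp only [A, conjTranspose_mul, diagonal_conjTranspose, star_trivial, Matrix.mul_assoc]
    rw [← Matrix.mul_assoc (diagonal _), diagonal_mul_diagonal]
    simp_rw [Real.mul_self_sqrt (hμ _)]
  have hAPA : (Aᴴ * A) i i = μ i * (Wᴴ * W) i i := by
    have : Aᴴ * A = diagonal (fun i => √(μ i)) * (Wᴴ * W) * diagonal (fun i => √(μ i)) := by
      simp only [A, conjTranspose_mul, diagonal_conjTranspose, star_trivial, Matrix.mul_assoc]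
    rw [this, mul_diagonal, diagonal_mul, mul_right_comm, Real.mul_self_sqrt (hμ i)]
  rw [← hAPA]
  exact apply_le_of_posSemidef_smul_one_sub
    ((posSemidef_smul_one_sub_conjTranspose_mul_self_iff hc A).mpr (hAA ▸ hN)) i

end Matrix

lemma frob_sq {d : ℕ} (A : Matrix (Fin d) (Fin d) ℝ) : frob A ^ 2 = (Aᵀ * A).trace := by
  refine Real.sq_sqrt ?_
  simpa using (posSemidef_conjTranspose_mul_self A).trace_nonneg

theorem neg_log_det_strongly_convex_general {d : ℕ} (C : ℝ) (hC : 0 < C)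
    (M N : Matrix (Fin d) (Fin d) ℝ) (hM : M.PosDef) (hN : N.PosDef)
    (hMC : ((C • (1 : Matrix (Fin d) (Fin d) ℝ)) - M).PosSemidef)
    (hNC : ((C • (1 : Matrix (Fin d) (Fin d) ℝ)) - N).PosSemidef) :
    1 / (2 * C ^ 2) * frob (N - M) ^ 2 ≤
      (-Real.log N.det) - (-Real.log M.det) - (-(M⁻¹ * (N - M)).trace) := by
  obtain ⟨W, μ, hW, hμ, rfl, rfl⟩ :=
    hM.exists_eq_mul_conjTranspose_and_eq_mul_diagonal_mul_conjTranspose hN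
  set E := W * diagonal μ * Wᴴ - W * Wᴴ
  have hP : (C • 1 - Wᴴ * W).PosSemidef :=
    (posSemidef_smul_one_sub_conjTranspose_mul_self_iff hC W).mpr hMC
  have hterm (i : Fin d) :
      (μ i - 1) ^ 2 * (Wᴴ * W) i i ≤ 2 * C * (μ i - 1 - Real.log (μ i)) :=
    Real.sq_sub_one_mul_le_two_mul_sub_one_sub_log (hμ i)
      (posSemidef_conjTranspose_mul_self W).diag_nonneg (apply_le_of_posSemidef_smul_one_sub hP i)
      (mul_conjTranspose_mul_self_apply_le (hμ · |>.le) hC hNC i)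
  have hEt : Eᵀ = E := by
    rw [← conjTranspose_eq_transpose_of_trivial]
    exact (hN.1.sub hM.1).eq
  rw [neg_log_det_sub_sub_eq_sum hW hμ, frob_sq, hEt]
  calc 1 / (2 * C ^ 2) * (E * E).trace
      ≤ 1 / (2 * C ^ 2) * (C * ∑ i, 2 * C * (μ i - 1 - Real.log (μ i))) := by
        gcongr
        exact (trace_mul_self_sub_le μ hP).trans
          (mul_le_mul_of_nonneg_left (Finset.sum_le_sum fun i _ => hterm i) hC.le)
    _ = ∑ i, (μ i - 1 - Real.log (μ i)) := by
        rw [← Finset.mul_sum]; field_simp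

/-- On `𝓜 = {A pos. def. : A ≤ C·I}`, the function `Ψ(M) = −log det(M)` is `(1/C²)`-strongly
convex w.r.t. the Frobenius norm, where the derivative is `DΨ(M)E = −tr(M⁻¹E)`. -/
theorem neg_log_det_strongly_convex {d : ℕ} (hd : 1 ≤ d) (C : ℝ) (hC : 0 < C)
    (M N : Matrix (Fin d) (Fin d) ℝ) (hM : M.PosDef) (hN : N.PosDef)
    (hMC : ((C • (1 : Matrix (Fin d) (Fin d) ℝ)) - M).PosSemidef)
    (hNC : ((C • (1 : Matrix (Fin d) (Fin d) ℝ)) - N).PosSemidef) :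
    1 / (2 * C ^ 2) * frob (N - M) ^ 2 ≤
      (-Real.log N.det) - (-Real.log M.det) - (-(M⁻¹ * (N - M)).trace) :=
  neg_log_det_strongly_convex_general C hC M N hM hN hMC hNC
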